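/- Let f : A → B and g : B → D be injective homomorphisms of finite undirected multigraphs. Define the multigraph C by V_C = (V_D ∖ g_V(V_B)) ∪ g_V(f_V(V_A)) and E_C = { x ∈ E_D | (x ∉ g_E(E_B) or x ∈ g_E(f_E(E_A))) and both endpoints of x (the entries of i_D(x)) lie in V_C }, with incidence map the restriction of i_D; let φ_D : C → D be the inclusion homomorphism and φ_C : A → C the corestriction of g ∘ f. Then the constructed square is final among pullback complements: for all finite undirected multigraphs W and R and homomorphisms p : W → A, q : W → R, r : R → D such that g ∘ (f ∘ p) = r ∘ q and the square with sides (f ∘ p : W → B, q : W → R, g : B → D, r : R → D) is a pullback (i.e., for every W' and homomorphisms p' : W' → B, q' : W' → R with g ∘ p' = r ∘ q' there exists a unique w : W' → W with (f ∘ p) ∘ w = p' and q ∘ w = q'), there exists a unique homomorphism s : R → C with φ_D ∘ s = r and s ∘ q = φ_C ∘ p. -/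

import Mathlib

/-- A finite undirected multigraph: a finite vertex set, a finite edge set, and an
incidence map assigning to each edge its unordered pair of endpoints (loops allowed). -/
structure MG where
  V : Type
  E : Type
  finV : Finite V
  finE : Finite E
  inc : E → Sym2 V

/-- A homomorphism of finite undirected multigraphs: a pair of maps on vertices and edges
compatible with the incidence maps. -/
structure MG.Hom (G H : MG) where
  vmap : G.V → H.V
  emap : G.E → H.E
  comm : ∀ e, H.inc (emap e) = Sym2.map vmap (G.inc e)

/-- A homomorphism is injective if both its components are injective. -/
def MG.Hom.Injective {G H : MG} (φ : G.Hom H) : Prop :=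
  Function.Injective φ.vmap ∧ Function.Injective φ.emap

/-- A homomorphism is surjective if both its components are surjective. -/
def MG.Hom.Surjective {G H : MG} (φ : G.Hom H) : Prop :=
  Function.Surjective φ.vmap ∧ Function.Surjective φ.emap

/-- A homomorphism is an isomorphism if both its components are bijective. -/
def MG.Hom.IsIso {G H : MG} (φ : G.Hom H) : Prop :=
  Function.Bijective φ.vmap ∧ Function.Bijective φ.emap

/-- Composition of homomorphisms of multigraphs. -/
def MG.Hom.comp {G H K : MG} (ψ : H.Hom K) (φ : G.Hom H) : G.Hom K where
  vmap := ψ.vmap ∘ φ.vmap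
  emap := ψ.emap ∘ φ.emap
  comm := by
    intro e
    simp only [Function.comp_apply, ψ.comm, φ.comm, Sym2.map_map]

/-- Any unordered pair all of whose entries satisfy a predicate `p` lifts to an
unordered pair of elements of the subtype of `p`. -/
lemma sym2_restrict_exists {α : Type} {p : α → Prop} (s : Sym2 α) (h : ∀ a ∈ s, p a) :
    ∃ t : Sym2 {a // p a}, Sym2.map Subtype.val t = s := by
  revert h
  induction s using Sym2.ind with
  | _ x y =>
    intro h
    exact ⟨s(⟨x, h x (by simp)⟩, ⟨y, h y (by simp)⟩), by simp⟩

namespace MG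

variable {A B D : MG}

/-- The vertex set `(V_D ∖ g_V(V_B)) ∪ g_V(f_V(V_A))` of the final pullback
complement of `g ∘ f`. -/
def fpcV (f : A.Hom B) (g : B.Hom D) : Set D.V :=
  (Set.range g.vmap)ᶜ ∪ Set.range (g.vmap ∘ f.vmap)

/-- The edge set of the final pullback complement of `g ∘ f`: the edges of `D` that
are not in `g_E(E_B)` unless they are in `g_E(f_E(E_A))`, and both of whose endpoints
lie in the vertex set `fpcV f g`. -/
def fpcE (f : A.Hom B) (g : B.Hom D) : Set D.E :=
  {x | (x ∉ Set.range g.emap ∨ x ∈ Set.range (g.emap ∘ f.emap)) ∧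
    ∀ w ∈ D.inc x, w ∈ fpcV f g}

/-- The final-pullback-complement object `C`: the multigraph with vertex set `fpcV f g`,
edge set `fpcE f g`, and incidence map the restriction of that of `D`. -/
noncomputable def fpc (f : A.Hom B) (g : B.Hom D) : MG where
  V := {v : D.V // v ∈ fpcV f g}
  E := {x : D.E // x ∈ fpcE f g}
  finV := by have := D.finV; exact inferInstance
  finE := by have := D.finE; exact inferInstance
  inc := fun x => (sym2_restrict_exists (D.inc x.val) x.prop.2).choose

lemma fpc_inc_spec (f : A.Hom B) (g : B.Hom D) (x : (fpc f g).E) :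
    Sym2.map Subtype.val ((fpc f g).inc x) = D.inc x.val :=
  (sym2_restrict_exists (D.inc x.val) x.prop.2).choose_spec

/-- The inclusion homomorphism `φ_D : C → D`. -/
noncomputable def fpcToD (f : A.Hom B) (g : B.Hom D) : (fpc f g).Hom D where
  vmap := Subtype.val
  emap := Subtype.val
  comm := fun x => (fpc_inc_spec f g x).symm

lemma fpc_vmem (f : A.Hom B) (g : B.Hom D) (a : A.V) :
    g.vmap (f.vmap a) ∈ fpcV f g :=
  Or.inr ⟨a, rfl⟩

lemma fpc_emem (f : A.Hom B) (g : B.Hom D) (e : A.E) :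
    g.emap (f.emap e) ∈ fpcE f g := by
  constructor
  · exact Or.inr ⟨e, rfl⟩
  · intro w hw
    rw [g.comm, f.comm, Sym2.map_map] at hw
    rcases Sym2.mem_map.mp hw with ⟨a, _, ha⟩
    exact Or.inr ⟨a, ha⟩

/-- The corestriction `φ_C : A → C` of `g ∘ f`. -/
noncomputable def fpcFromA (f : A.Hom B) (g : B.Hom D) : A.Hom (fpc f g) where
  vmap := fun a => ⟨g.vmap (f.vmap a), fpc_vmem f g a⟩
  emap := fun e => ⟨g.emap (f.emap e), fpc_emem f g e⟩
  comm := by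
    intro e
    apply Sym2.map.injective (Subtype.val_injective)
    refine (fpc_inc_spec f g _).trans ?_
    dsimp only
    rw [g.comm, f.comm, Sym2.map_map]
    first
    | exact (Sym2.map_map _ _ _).symm
    | exact Eq.symm Sym2.map_map
    | induction A.inc e using Sym2.ind with
      | _ x y => rfl

end MG

/-! `C` is a subgraph of `D`, so `s` must be the corestriction of `r`, which is unique since
`φ_D` is a monomorphism; the whole point is that `r` lands in `C`. A vertex or edge of `R` is a
homomorphism from the one-vertex graph or the one-edge graph, and if its image under `r` lies in
`g(B)`, the pullback property lifts it to `W`, so its image lies in `g(f(A))`. -/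

theorem Sym2.exists_mk_eq_of_map_eq {α β γ : Type*} {φ : α → γ} {ψ : β → γ} {s : Sym2 α}
    {t : Sym2 β} (h : Sym2.map φ s = Sym2.map ψ t) :
    ∃ a₁ a₂ b₁ b₂, s = s(a₁, a₂) ∧ t = s(b₁, b₂) ∧ φ a₁ = ψ b₁ ∧ φ a₂ = ψ b₂ := by
  induction s using Sym2.ind with | _ a₁ a₂ =>
  induction t using Sym2.ind with | _ b₁ b₂ =>
  rw [Sym2.map_mk, Sym2.map_mk, Sym2.eq_iff] at h
  rcases h with ⟨h₁, h₂⟩ | ⟨h₁, h₂⟩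
  · exact ⟨a₁, a₂, b₁, b₂, rfl, rfl, h₁, h₂⟩
  · exact ⟨a₁, a₂, b₂, b₁, rfl, Sym2.eq_swap, h₁, h₂⟩

namespace MG

@[ext]
theorem Hom.ext {G H : MG} {φ ψ : G.Hom H} (hv : φ.vmap = ψ.vmap) (he : φ.emap = ψ.emap) :
    φ = ψ := by
  cases φ; cases ψ; simp_all

theorem Hom.comp_assoc {G H K L : MG} (χ : K.Hom L) (ψ : H.Hom K) (φ : G.Hom H) :
    (χ.comp ψ).comp φ = χ.comp (ψ.comp φ) :=
  rfl

def vertexGraph : MG where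
  V := Unit
  E := Empty
  finV := inferInstance
  finE := inferInstance
  inc := Empty.elim

def edgeGraph : MG where
  V := Bool
  E := Unit
  finV := inferInstance
  finE := inferInstance
  inc := fun _ => s(false, true)

def vertexHom (G : MG) (v : G.V) : vertexGraph.Hom G where
  vmap := fun _ => v
  emap := Empty.elim
  comm := fun e => e.elim

def edgeHom (G : MG) (e : G.E) (v₁ v₂ : G.V) (h : G.inc e = s(v₁, v₂)) : edgeGraph.Hom G where
  vmap := fun b => cond b v₂ v₁
  emap := fun _ => e
  comm := fun _ => by simpa [edgeGraph] using h

section WeakPullback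

variable {W B R D : MG} {p : W.Hom B} {g : B.Hom D} {r : R.Hom D}

/-- The existence half of the pullback property of a square over the cospan `g, r` with
`B`-leg `p`, with the other leg forgotten. -/
def ConesFactorThrough (g : B.Hom D) (r : R.Hom D) (p : W.Hom B) : Prop :=
  ∀ (W' : MG) (p' : W'.Hom B) (q' : W'.Hom R), g.comp p' = r.comp q' →
    ∃ w : W'.Hom W, p.comp w = p'

theorem vmap_mem_range_of_factors (hfac : ConesFactorThrough g r p) {v : R.V}
    (hv : r.vmap v ∈ Set.range g.vmap) :
    r.vmap v ∈ Set.range (g.vmap ∘ p.vmap) := by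
  obtain ⟨b, hb⟩ := hv
  have hsq : g.comp (vertexHom B b) = r.comp (vertexHom R v) := by
    ext x
    · exact hb
    · exact x.elim
  obtain ⟨w, hw⟩ := hfac _ _ _ hsq
  have hwb : p.vmap (w.vmap ()) = b := congrFun (congrArg Hom.vmap hw) ()
  exact ⟨w.vmap (), by rw [Function.comp_apply, hwb, hb]⟩

theorem emap_mem_range_of_factors (hfac : ConesFactorThrough g r p) {x : R.E}
    (hx : r.emap x ∈ Set.range g.emap) :
    r.emap x ∈ Set.range (g.emap ∘ p.emap) := by
  obtain ⟨e, he⟩ := hx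
  have hinc : Sym2.map g.vmap (B.inc e) = Sym2.map r.vmap (R.inc x) := by
    rw [← g.comm, ← r.comm, he]
  obtain ⟨b₁, b₂, u₁, u₂, hb, hu, h₁, h₂⟩ := Sym2.exists_mk_eq_of_map_eq hinc
  have hsq : g.comp (edgeHom B e b₁ b₂ hb) = r.comp (edgeHom R x u₁ u₂ hu) := by
    ext i
    · cases i
      · exact h₁
      · exact h₂
    · exact he
  obtain ⟨w, hw⟩ := hfac _ _ _ hsq
  have hwe : p.emap (w.emap ()) = e := congrFun (congrArg Hom.emap hw) ()
  exact ⟨w.emap (), by rw [Function.comp_apply, hwe, he]⟩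

end WeakPullback

section FinalPullbackComplement

variable {A B D R : MG} {f : A.Hom B} {g : B.Hom D}

def fpcLift (r : R.Hom D) (hv : ∀ v, r.vmap v ∈ fpcV f g) (he : ∀ x, r.emap x ∈ fpcE f g) :
    R.Hom (fpc f g) where
  vmap := fun v => ⟨r.vmap v, hv v⟩
  emap := fun x => ⟨r.emap x, he x⟩
  comm := fun x => by
    apply Sym2.map.injective Subtype.val_injective
    refine (fpc_inc_spec f g _).trans ?_
    rw [r.comm]
    exact Eq.symm (Sym2.map_map (R.inc x))

theorem fpcToD_comp_fpcLift {r : R.Hom D} (hv : ∀ v, r.vmap v ∈ fpcV f g)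
    (he : ∀ x, r.emap x ∈ fpcE f g) :
    (fpcToD f g).comp (fpcLift r hv he) = r :=
  rfl

theorem fpcToD_comp_fpcFromA : (fpcToD f g).comp (fpcFromA f g) = g.comp f :=
  rfl

theorem fpcToD_comp_injective {G : MG} :
    Function.Injective fun s : G.Hom (fpc f g) => (fpcToD f g).comp s := by
  intro s s' h
  ext x
  · exact Subtype.ext (congrFun (congrArg Hom.vmap h) x)
  · exact Subtype.ext (congrFun (congrArg Hom.emap h) x)

variable {W : MG} {p : W.Hom A} {r : R.Hom D}

theorem vmap_mem_fpcV_of_factors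
    (hfac : ConesFactorThrough g r (f.comp p)) (v : R.V) : r.vmap v ∈ fpcV f g := by
  by_cases hv : r.vmap v ∈ Set.range g.vmap
  · obtain ⟨w, hw⟩ := vmap_mem_range_of_factors hfac hv
    exact Or.inr ⟨p.vmap w, hw⟩
  · exact Or.inl hv

theorem emap_mem_fpcE_of_factors
    (hfac : ConesFactorThrough g r (f.comp p)) (x : R.E) : r.emap x ∈ fpcE f g := by
  refine ⟨?_, fun d hd => ?_⟩
  · by_cases hx : r.emap x ∈ Set.range g.emap
    · obtain ⟨w, hw⟩ := emap_mem_range_of_factors hfac hx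
      exact Or.inr ⟨p.emap w, hw⟩
    · exact Or.inl hx
  · rw [r.comm] at hd
    obtain ⟨v, -, rfl⟩ := Sym2.mem_map.mp hd
    exact vmap_mem_fpcV_of_factors hfac v

end FinalPullbackComplement

end MG

theorem mg_fpc_is_final_general (A B D : MG) (f : A.Hom B) (g : B.Hom D)
    (W R : MG) (p : W.Hom A) (q : W.Hom R) (r : R.Hom D)
    (hcomm : g.comp (f.comp p) = r.comp q)
    (hpb : ∀ (W' : MG) (p' : W'.Hom B) (q' : W'.Hom R),
      g.comp p' = r.comp q' →
      ∃! w : W'.Hom W, (f.comp p).comp w = p' ∧ q.comp w = q') :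
    ∃! s : R.Hom (MG.fpc f g),
      (MG.fpcToD f g).comp s = r ∧ s.comp q = (MG.fpcFromA f g).comp p := by
  have hfac : MG.ConesFactorThrough g r (f.comp p) :=
    fun W' p' q' h => (hpb W' p' q' h).exists.imp fun _ => And.left
  have hv := MG.vmap_mem_fpcV_of_factors hfac
  have he := MG.emap_mem_fpcE_of_factors hfac
  refine ⟨MG.fpcLift r hv he, ⟨MG.fpcToD_comp_fpcLift hv he, MG.fpcToD_comp_injective ?_⟩,
    fun s hs => MG.fpcToD_comp_injective (hs.1.trans (MG.fpcToD_comp_fpcLift hv he).symm)⟩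
  change r.comp q = ((MG.fpcToD f g).comp (MG.fpcFromA f g)).comp p
  rw [MG.fpcToD_comp_fpcFromA, MG.Hom.comp_assoc, hcomm]

/-- **Finality of the constructed pullback complement.** For composable injective
homomorphisms `f : A → B`, `g : B → D` of finite undirected multigraphs, the explicitly
constructed square `(φ_C : A → C, φ_D : C → D)` is final among pullback complements:
whenever `p : W → A`, `q : W → R`, `r : R → D` satisfy `g ∘ (f ∘ p) = r ∘ q` and the
square with sides `(f ∘ p, q, g, r)` is a pullback, there is a unique homomorphism
`s : R → C` with `φ_D ∘ s = r` and `s ∘ q = φ_C ∘ p`. -/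
theorem mg_fpc_is_final (A B D : MG) (f : A.Hom B) (g : B.Hom D)
    (hf : f.Injective) (hg : g.Injective)
    (W R : MG) (p : W.Hom A) (q : W.Hom R) (r : R.Hom D)
    (hcomm : g.comp (f.comp p) = r.comp q)
    (hpb : ∀ (W' : MG) (p' : W'.Hom B) (q' : W'.Hom R),
      g.comp p' = r.comp q' →
      ∃! w : W'.Hom W, (f.comp p).comp w = p' ∧ q.comp w = q') :
    ∃! s : R.Hom (MG.fpc f g),
      (MG.fpcToD f g).comp s = r ∧ s.comp q = (MG.fpcFromA f g).comp p :=
  mg_fpc_is_final_general A B D f g W R p q r hcomm hpb
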